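/- Let H be a finite simple graph, p a prime, Γ ⊆ Aut(H) a p-group, Φ a graph property, and c a nonnegative integer with c < ℓ(H). Suppose that Φ evaluates to 1 on the empty edge-subgraph of H and that Φ(F) = 0 for every fixed point F ∈ fp(Γ,H) with level ℓ(F) > ℓ(H) − c. Then there exists a fixed point S ∈ fp(Γ,H) with χ̂(Φ,S) ≢ 0 (mod p) and ℓ(S) ≥ c. -/

import Mathlib

open scoped Classical

/-!
Statement 6: Let `Γ ⊆ Aut(H)` be a `p`-group, `Φ` a graph property, and `c < ℓ(H)` a
nonnegative integer. If `Φ(∅) = 1` (on the empty edge-subgraph of `H`) and `Φ(F) = 0`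
for every fixed point `F` with `ℓ(F) > ℓ(H) − c`, then there is a fixed point `S` with
`χ̂(Φ,S) ≢ 0 (mod p)` and `ℓ(S) ≥ c`.
-/

/-- The orbit of an edge `e` under a subgroup `Γ` of permutations of the vertices. -/
def EdgeOrbit {V : Type*} (Γ : Subgroup (Equiv.Perm V)) (e : Sym2 V) : Set (Sym2 V) :=
  {f | ∃ g ∈ Γ, f = Sym2.map (⇑g) e}

/-- The set of orbits `E(H)/Γ`. -/
def EdgeOrbits {V : Type*} (Γ : Subgroup (Equiv.Perm V)) (H : SimpleGraph V) :
    Set (Set (Sym2 V)) :=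
  {O | ∃ e ∈ H.edgeSet, O = EdgeOrbit Γ e}

/-- `A` is a fixed point of `Γ` in `H`. -/
def IsFixedPoint {V : Type*} (Γ : Subgroup (Equiv.Perm V)) (H A : SimpleGraph V) : Prop :=
  A ≤ H ∧ ∀ g ∈ Γ, Sym2.map (⇑g) '' A.edgeSet = A.edgeSet

/-- The level `ℓ(A)` of a fixed point `A`: the number of orbits of `E(H)/Γ`
contained in `E(A)`. -/
noncomputable def level {V : Type*} (Γ : Subgroup (Equiv.Perm V)) (H A : SimpleGraph V) : ℕ :=
  {O | O ∈ EdgeOrbits Γ H ∧ O ⊆ A.edgeSet}.ncard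

/-- The alternating enumerator `χ̂(Φ,H) = Σ_{S ⊆ E(H)} Φ(H[S])·(−1)^{|S|}`. -/
noncomputable def altEnum {V : Type*} [Fintype V] [DecidableEq V]
    (Φ : SimpleGraph V → Prop) (H : SimpleGraph V) : ℤ :=
  ∑ S ∈ H.edgeFinset.powerset,
    if Φ (SimpleGraph.fromEdgeSet (S : Set (Sym2 V))) then (-1 : ℤ) ^ S.card else 0

/-!
Edge sets fixed by `Γ` inside `H` are exactly the unions `⋃ A` of families `A` of edge orbits,
and `ℓ(⋃ A) = |A|`. As `Γ` is a `p`-group, the non-invariant edge subsets of `⋃ A` fall into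
orbits of size divisible by `p`, so modulo `p` only invariant subsets survive in `χ̂(Φ, ⋃ A)`:
`χ̂(Φ, ⋃ A) ≡ ∑_{B ⊆ A} m(B)` with `m(B) = Φ(⋃ B)·(−1)^{|⋃ B|}`. By hypothesis `m(∅) = 1` and `m`
vanishes on families of more than `ℓ(H) − c` orbits. If the theorem failed, the set function
`A ↦ ∑_{B ⊆ A} m(B)` would vanish on all families of at least `c` orbits. A set function of
"degree" `≤ d` vanishing on the top `d + 1` layers of the cube vanishes identically, since its
discrete derivatives have degree `≤ d − 1` and vanish on the top `d` layers; so `m(∅) = 0`.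
-/

open Finset MulAction SimpleGraph
open scoped Pointwise

theorem Finset.sum_powerset_eq_zero_of_vanishing_top_layers {ι M : Type*} [DecidableEq ι]
    [AddCommGroup M] (d : ℕ) {E : Finset ι} {m : Finset ι → M}
    (hm : ∀ B ⊆ E, d ≤ #B → m B = 0)
    (htop : ∀ A ⊆ E, #E < #A + d → ∑ B ∈ A.powerset, m B = 0) :
    ∀ A ⊆ E, ∑ B ∈ A.powerset, m B = 0 := by
  induction d generalizing E m with
  | zero =>
    exact fun A hA => sum_eq_zero fun B hB => hm B ((mem_powerset.1 hB).trans hA) (Nat.zero_le _)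
  | succ d ih =>
    -- the derivative `A ↦ ∑ B ∈ A.powerset, m (insert i B)` falls under the induction hypothesis
    have hstep : ∀ i ∈ E, ∀ A ⊆ E.erase i, ∑ B ∈ A.powerset, m (insert i B) = 0 := by
      intro i hi
      refine ih (fun B hB hdB => hm _ (insert_subset hi (hB.trans (erase_subset i E))) ?_)
        fun A hA hcard => ?_
      · rw [card_insert_of_notMem fun h => by simpa using hB h]; omega
      · have hiA : i ∉ A := fun h => by simpa using hA h
        have hAE : A ⊆ E := hA.trans (erase_subset i E)
        have hE := card_erase_add_one hi
        have h := sum_powerset_insert hiA m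
        rw [htop _ (insert_subset hi hAE) (by rw [card_insert_of_notMem hiA]; omega),
          htop A hAE (by omega), zero_add] at h
        exact h.symm
    have hconst : ∀ A ⊆ E, ∑ B ∈ A.powerset, m B = ∑ B ∈ (∅ : Finset ι).powerset, m B := by
      intro A
      induction A using Finset.induction_on with
      | empty => exact fun _ => rfl
      | insert i A hiA ih =>
        intro hA
        have hi : i ∈ E := hA (mem_insert_self i A)
        rw [sum_powerset_insert hiA, hstep i hi A fun x hx => mem_erase.2
          ⟨fun h => hiA (h ▸ hx), hA (mem_insert_of_mem hx)⟩, add_zero,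
          ih ((subset_insert i A).trans hA)]
    intro A hA
    rw [hconst A hA, ← hconst E Subset.rfl, htop E Subset.rfl (by omega)]

theorem IsPGroup.card_filter_modEq_card_filter_fixedPoints {p : ℕ} [Fact p.Prime]
    {G α : Type*} [Group G] [Fintype α] [MulAction G α] (hG : IsPGroup p G)
    (P : α → Prop) [DecidablePred P] (hP : ∀ (g : G) (x : α), P (g • x) ↔ P x) :
    #{x | P x} ≡ #{x | P x ∧ x ∈ fixedPoints G α} [MOD p] := by
  let s : SubMulAction G α := ⟨{x | P x}, fun g x hx => (hP g x).2 hx⟩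
  have hfix : fixedPoints G s ≃ {x // P x ∧ x ∈ fixedPoints G α} :=
    (Equiv.subtypeEquivRight fun x => by simp [Subtype.ext_iff]).trans
      (Equiv.subtypeSubtypeEquivSubtypeInter P (· ∈ fixedPoints G α))
  have h := hG.card_modEq_card_fixedPoints s
  rw [Nat.card_congr hfix, Nat.card_eq_fintype_card, Nat.card_eq_fintype_card,
    Fintype.card_subtype, Fintype.card_subtype] at h
  convert h using 3
  exact Iff.rfl

theorem IsPGroup.sum_eq_sum_filter_fixedPoints {p : ℕ} [Fact p.Prime]
    {G α : Type*} [Group G] [Fintype α] [MulAction G α] (hG : IsPGroup p G)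
    {s : Finset α} (hs : ∀ (g : G), ∀ x ∈ s, g • x ∈ s)
    (f : α → ZMod p) (hf : ∀ (g : G) (x : α), f (g • x) = f x) :
    ∑ x ∈ s, f x = ∑ x ∈ s with x ∈ fixedPoints G α, f x := by
  have hfiber : ∀ t : Finset α, ∑ x ∈ t, f x = ∑ v, (#{x ∈ t | f x = v} : ZMod p) * v := by
    intro t
    rw [← sum_fiberwise t f f]
    refine sum_congr rfl fun v _ => ?_
    rw [sum_congr rfl fun x hx => (mem_filter.1 hx).2, sum_const, nsmul_eq_mul]
  rw [hfiber, hfiber]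
  -- each fibre of `f` in `s` is `G`-invariant, so it has as many points as fixed points mod `p`
  refine sum_congr rfl fun v _ => congrArg (· * v) ?_
  have hP : ∀ (g : G) (x : α), g • x ∈ s ∧ f (g • x) = v ↔ x ∈ s ∧ f x = v := fun g x => by
    refine and_congr ⟨fun h => ?_, hs g x⟩ (by rw [hf])
    simpa using hs g⁻¹ _ h
  rw [ZMod.natCast_eq_natCast_iff, filter_filter]
  convert hG.card_filter_modEq_card_filter_fixedPoints (fun x => x ∈ s ∧ f x = v) hP using 2
  · ext; simp
  · ext; simp; tauto

instance Equiv.Perm.sym2MulAction {V : Type*} : MulAction (Equiv.Perm V) (Sym2 V) where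
  smul g := Sym2.map g
  one_smul := congrFun Sym2.map_id
  mul_smul g h e := (Sym2.map_map (g := g) (f := h) e).symm

lemma Equiv.Perm.smul_sym2 {V : Type*} (g : Equiv.Perm V) (e : Sym2 V) :
    g • e = Sym2.map g e := rfl

lemma SimpleGraph.edgeSet_fromEdgeSet_of_subset {V : Type*} {G : SimpleGraph V}
    {s : Set (Sym2 V)} (hs : s ⊆ G.edgeSet) : (fromEdgeSet s).edgeSet = s := by
  rw [edgeSet_fromEdgeSet, sdiff_eq_left]
  exact Set.disjoint_left.2 fun e he => G.not_isDiag_of_mem_edgeSet (hs he)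

section EdgeOrbits

variable {V : Type*} {Γ : Subgroup (Equiv.Perm V)} {H : SimpleGraph V}

lemma edgeOrbit_eq_orbit (e : Sym2 V) : EdgeOrbit Γ e = orbit Γ e := by
  ext f
  simp [EdgeOrbit, mem_orbit_iff, eq_comm, Subgroup.smul_def, Equiv.Perm.smul_sym2]

lemma mem_edgeOrbits_iff {O : Set (Sym2 V)} :
    O ∈ EdgeOrbits Γ H ↔ ∃ e ∈ H.edgeSet, O = orbit Γ e := by
  simp [EdgeOrbits, edgeOrbit_eq_orbit]

lemma subset_edgeSet_of_mem_edgeOrbits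
    (hAut : ∀ g ∈ Γ, ∀ u v : V, H.Adj (g u) (g v) ↔ H.Adj u v)
    {O : Set (Sym2 V)} (hO : O ∈ EdgeOrbits Γ H) : O ⊆ H.edgeSet := by
  obtain ⟨e, he, rfl⟩ := mem_edgeOrbits_iff.1 hO
  rintro _ ⟨⟨g, hg⟩, rfl⟩
  induction e with
  | h u v => exact (hAut g hg u v).2 he

lemma eq_orbit_of_mem_edgeOrbits {O : Set (Sym2 V)} (hO : O ∈ EdgeOrbits Γ H) {e : Sym2 V}
    (he : e ∈ O) : O = orbit Γ e := by
  obtain ⟨f, -, rfl⟩ := mem_edgeOrbits_iff.1 hO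
  exact (orbit_eq_iff.2 he).symm

lemma nonempty_of_mem_edgeOrbits {O : Set (Sym2 V)} (hO : O ∈ EdgeOrbits Γ H) :
    O.Nonempty := by
  obtain ⟨e, -, rfl⟩ := mem_edgeOrbits_iff.1 hO
  exact ⟨e, mem_orbit_self e⟩

lemma smul_mem_iff_of_mem_edgeOrbits {O : Set (Sym2 V)} (hO : O ∈ EdgeOrbits Γ H) (g : Γ)
    {e : Sym2 V} : g • e ∈ O ↔ e ∈ O := by
  obtain ⟨f, -, rfl⟩ := mem_edgeOrbits_iff.1 hO
  rw [← orbit_eq_iff, orbit_smul, orbit_eq_iff]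

variable [Fintype V]

noncomputable def orbitFinset (Γ : Subgroup (Equiv.Perm V)) (H : SimpleGraph V) :
    Finset (Set (Sym2 V)) :=
  (Set.toFinite (EdgeOrbits Γ H)).toFinset

lemma mem_orbitFinset {O : Set (Sym2 V)} : O ∈ orbitFinset Γ H ↔ O ∈ EdgeOrbits Γ H :=
  Set.Finite.mem_toFinset _

lemma ncard_edgeOrbits : (EdgeOrbits Γ H).ncard = #(orbitFinset Γ H) :=
  Set.ncard_eq_toFinset_card _ _

noncomputable def orbitUnion (A : Finset (Set (Sym2 V))) : Finset (Sym2 V) :=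
  {e | ∃ O ∈ A, e ∈ O}

variable {A : Finset (Set (Sym2 V))}

lemma mem_orbitUnion {e : Sym2 V} : e ∈ orbitUnion A ↔ ∃ O ∈ A, e ∈ O := by
  simp [orbitUnion]

lemma subset_orbitUnion {O : Set (Sym2 V)} (hO : O ∈ A) : O ⊆ orbitUnion A :=
  fun _ he => mem_orbitUnion.2 ⟨O, hO, he⟩

lemma orbitUnion_mono {B : Finset (Set (Sym2 V))} (h : B ⊆ A) : orbitUnion B ⊆ orbitUnion A :=
  fun _ he => by
    obtain ⟨O, hO, heO⟩ := mem_orbitUnion.1 he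
    exact mem_orbitUnion.2 ⟨O, h hO, heO⟩

lemma subset_orbitUnion_iff (hA : A ⊆ orbitFinset Γ H) {O : Set (Sym2 V)}
    (hO : O ∈ EdgeOrbits Γ H) : O ⊆ orbitUnion A ↔ O ∈ A := by
  refine ⟨fun h => ?_, subset_orbitUnion⟩
  obtain ⟨e, he⟩ := nonempty_of_mem_edgeOrbits hO
  obtain ⟨O', hO', heO'⟩ := mem_orbitUnion.1 (h he)
  rwa [eq_orbit_of_mem_edgeOrbits hO he,
    ← eq_orbit_of_mem_edgeOrbits (mem_orbitFinset.1 (hA hO')) heO']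

lemma orbitUnion_subset_edgeSet (hAut : ∀ g ∈ Γ, ∀ u v : V, H.Adj (g u) (g v) ↔ H.Adj u v)
    (hA : A ⊆ orbitFinset Γ H) : ↑(orbitUnion A) ⊆ H.edgeSet := by
  intro e he
  obtain ⟨O, hO, heO⟩ := mem_orbitUnion.1 he
  exact subset_edgeSet_of_mem_edgeOrbits hAut (mem_orbitFinset.1 (hA hO)) heO

lemma edgeSet_fromEdgeSet_orbitUnion
    (hAut : ∀ g ∈ Γ, ∀ u v : V, H.Adj (g u) (g v) ↔ H.Adj u v) (hA : A ⊆ orbitFinset Γ H) :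
    (fromEdgeSet (orbitUnion A : Set (Sym2 V))).edgeSet = orbitUnion A :=
  edgeSet_fromEdgeSet_of_subset (orbitUnion_subset_edgeSet hAut hA)

lemma level_orbitUnion (hAut : ∀ g ∈ Γ, ∀ u v : V, H.Adj (g u) (g v) ↔ H.Adj u v)
    (hA : A ⊆ orbitFinset Γ H) :
    level Γ H (fromEdgeSet (orbitUnion A : Set (Sym2 V))) = #A := by
  rw [level, edgeSet_fromEdgeSet_orbitUnion hAut hA, ← Set.ncard_coe_finset]
  congr 1
  ext O
  exact ⟨fun ⟨hO, hOA⟩ => (subset_orbitUnion_iff hA hO).1 hOA,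
    fun hOA => ⟨mem_orbitFinset.1 (hA hOA), subset_orbitUnion hOA⟩⟩

variable [DecidableEq V]

lemma smul_orbitUnion (hA : A ⊆ orbitFinset Γ H) (g : Γ) : g • orbitUnion A = orbitUnion A := by
  ext e
  rw [← inv_smul_mem_iff, mem_orbitUnion, mem_orbitUnion]
  exact exists_congr fun O => and_congr_right fun hO =>
    smul_mem_iff_of_mem_edgeOrbits (mem_orbitFinset.1 (hA hO)) g⁻¹

lemma isFixedPoint_orbitUnion (hAut : ∀ g ∈ Γ, ∀ u v : V, H.Adj (g u) (g v) ↔ H.Adj u v)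
    (hA : A ⊆ orbitFinset Γ H) :
    IsFixedPoint Γ H (fromEdgeSet (orbitUnion A : Set (Sym2 V))) := by
  refine ⟨(fromEdgeSet_le _).2 (Set.sdiff_subset.trans (orbitUnion_subset_edgeSet hAut hA)),
    fun g hg => ?_⟩
  rw [edgeSet_fromEdgeSet_orbitUnion hAut hA]
  have h := congrArg ((↑) : Finset (Sym2 V) → Set (Sym2 V)) (smul_orbitUnion hA ⟨g, hg⟩)
  rwa [Finset.coe_smul_finset, ← Set.image_smul] at h

lemma orbitUnion_filter_subset_of_mem_fixedPoints (hA : A ⊆ orbitFinset Γ H)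
    {S : Finset (Sym2 V)} (hSA : S ⊆ orbitUnion A) (hS : S ∈ fixedPoints Γ (Finset (Sym2 V))) :
    orbitUnion {O ∈ A | O ⊆ S} = S := by
  ext e
  simp only [mem_orbitUnion, mem_filter]
  refine ⟨fun ⟨O, ⟨_, hOS⟩, heO⟩ => hOS heO, fun he => ?_⟩
  obtain ⟨O, hO, heO⟩ := mem_orbitUnion.1 (hSA he)
  refine ⟨O, ⟨hO, ?_⟩, heO⟩
  rw [eq_orbit_of_mem_edgeOrbits (mem_orbitFinset.1 (hA hO)) heO]
  rintro _ ⟨g, rfl⟩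
  rw [← hS g]
  exact smul_mem_smul_finset he

lemma sum_fixedPoints_powerset_orbitUnion {M : Type*} [AddCommMonoid M]
    (hA : A ⊆ orbitFinset Γ H) (f : Finset (Sym2 V) → M) :
    ∑ S ∈ (orbitUnion A).powerset with S ∈ fixedPoints Γ (Finset (Sym2 V)), f S
      = ∑ B ∈ A.powerset, f (orbitUnion B) := by
  refine sum_nbij' (fun S => {O ∈ A | O ⊆ S}) orbitUnion (fun S _ => ?_) (fun B hB => ?_)
    (fun S hS => ?_) (fun B hB => ?_) (fun S hS => ?_)
  · simp
  · rw [mem_powerset] at hB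
    simp only [mem_filter, mem_powerset, mem_fixedPoints]
    exact ⟨orbitUnion_mono hB, smul_orbitUnion (hB.trans hA)⟩
  · simp only [mem_filter, mem_powerset] at hS
    exact orbitUnion_filter_subset_of_mem_fixedPoints hA hS.1 hS.2
  · rw [mem_powerset] at hB
    ext O
    rw [mem_filter]
    exact ⟨fun ⟨hOA, hOB⟩ =>
      (subset_orbitUnion_iff (hB.trans hA) (mem_orbitFinset.1 (hA hOA))).1 hOB,
      fun hOB => ⟨hB hOB, subset_orbitUnion hOB⟩⟩
  · simp only [mem_filter, mem_powerset] at hS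
    rw [orbitUnion_filter_subset_of_mem_fixedPoints hA hS.1 hS.2]

end EdgeOrbits

section AltEnum

variable {V : Type*} [Fintype V] [DecidableEq V] {Φ : SimpleGraph V → Prop}

noncomputable def altWeight (Φ : SimpleGraph V → Prop) (S : Finset (Sym2 V)) : ℤ :=
  if Φ (fromEdgeSet S) then (-1) ^ #S else 0

lemma altEnum_eq_sum_altWeight {G : SimpleGraph V} {E : Finset (Sym2 V)}
    (hGE : G.edgeSet = E) : altEnum Φ G = ∑ S ∈ E.powerset, altWeight Φ S := by
  rw [altEnum, coe_injective (coe_edgeFinset G ▸ hGE : (G.edgeFinset : Set (Sym2 V)) = E)]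
  rfl

omit [Fintype V] in
lemma altWeight_smul (hΦiso : ∀ A B : SimpleGraph V, Nonempty (A ≃g B) → (Φ A ↔ Φ B))
    (g : Equiv.Perm V) (S : Finset (Sym2 V)) : altWeight Φ (g • S) = altWeight Φ S := by
  have hiso : fromEdgeSet (S : Set (Sym2 V)) ≃g fromEdgeSet ↑(g • S) := ⟨g, fun {a b} => by
    simp only [fromEdgeSet_adj, mem_coe, Ne, EmbeddingLike.apply_eq_iff_eq]
    rw [show s(g a, g b) = g • s(a, b) from rfl, smul_mem_smul_finset_iff]⟩
  simp only [altWeight, card_smul_finset, hΦiso _ _ ⟨hiso⟩]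

variable {p : ℕ} [Fact p.Prime] {Γ : Subgroup (Equiv.Perm V)}

lemma altEnum_cast_eq_sum_fixedPoints (hΓ : IsPGroup p Γ)
    (hΦiso : ∀ A B : SimpleGraph V, Nonempty (A ≃g B) → (Φ A ↔ Φ B))
    {G : SimpleGraph V} {E : Finset (Sym2 V)} (hGE : G.edgeSet = E) (hE : ∀ g : Γ, g • E = E) :
    (altEnum Φ G : ZMod p) = ∑ S ∈ E.powerset with S ∈ fixedPoints Γ (Finset (Sym2 V)),
      (altWeight Φ S : ZMod p) := by
  rw [altEnum_eq_sum_altWeight hGE, Int.cast_sum]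
  refine hΓ.sum_eq_sum_filter_fixedPoints (fun g S hS => ?_) _ fun g S => ?_
  · rw [mem_powerset] at hS ⊢
    rw [← hE g]
    exact smul_finset_subset_smul_finset hS
  · rw [Subgroup.smul_def, altWeight_smul hΦiso]

lemma altEnum_orbitUnion_cast {H : SimpleGraph V}
    (hAut : ∀ g ∈ Γ, ∀ u v : V, H.Adj (g u) (g v) ↔ H.Adj u v) (hΓ : IsPGroup p Γ)
    (hΦiso : ∀ A B : SimpleGraph V, Nonempty (A ≃g B) → (Φ A ↔ Φ B))
    {A : Finset (Set (Sym2 V))} (hA : A ⊆ orbitFinset Γ H) :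
    (altEnum Φ (fromEdgeSet (orbitUnion A : Set (Sym2 V))) : ZMod p)
      = ∑ B ∈ A.powerset, (altWeight Φ (orbitUnion B) : ZMod p) := by
  rw [altEnum_cast_eq_sum_fixedPoints hΓ hΦiso (edgeSet_fromEdgeSet_orbitUnion hAut hA)
    (smul_orbitUnion hA), sum_fixedPoints_powerset_orbitUnion hA]

end AltEnum

theorem stmt_6 {V : Type*} [Fintype V] [DecidableEq V]
    (H : SimpleGraph V) (p : ℕ) (hp : p.Prime)
    (Γ : Subgroup (Equiv.Perm V))
    (hAut : ∀ g ∈ Γ, ∀ u v : V, H.Adj (g u) (g v) ↔ H.Adj u v)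
    (hΓ : IsPGroup p Γ)
    (Φ : SimpleGraph V → Prop)
    (hΦiso : ∀ A B : SimpleGraph V, Nonempty (A ≃g B) → (Φ A ↔ Φ B))
    (c : ℕ) (hc : c < (EdgeOrbits Γ H).ncard)
    (hempty : Φ ⊥)
    (hhigh : ∀ F : SimpleGraph V, IsFixedPoint Γ H F →
      (EdgeOrbits Γ H).ncard - c < level Γ H F → ¬ Φ F) :
    ∃ S : SimpleGraph V, IsFixedPoint Γ H S ∧
      ¬ (altEnum Φ S ≡ 0 [ZMOD p]) ∧ c ≤ level Γ H S := by
  have := Fact.mk hp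
  by_contra hcon
  rw [ncard_edgeOrbits] at hc hhigh
  set L := #(orbitFinset Γ H)
  set m : Finset (Set (Sym2 V)) → ZMod p := fun B => altWeight Φ (orbitUnion B)
  have hm : ∀ B ⊆ orbitFinset Γ H, L - c + 1 ≤ #B → m B = 0 := fun B hB hcard => by
    have hB := hhigh _ (isFixedPoint_orbitUnion hAut hB) (by rw [level_orbitUnion hAut hB]; omega)
    simp [m, altWeight, hB]
  have htop : ∀ A ⊆ orbitFinset Γ H, L < #A + (L - c + 1) → ∑ B ∈ A.powerset, m B = 0 := by
    intro A hA hcard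
    rw [← altEnum_orbitUnion_cast hAut hΓ hΦiso hA, ZMod.intCast_zmod_eq_zero_iff_dvd,
      ← Int.modEq_zero_iff_dvd]
    by_contra hne
    exact hcon ⟨_, isFixedPoint_orbitUnion hAut hA, hne, by rw [level_orbitUnion hAut hA]; omega⟩
  have h := sum_powerset_eq_zero_of_vanishing_top_layers _ hm htop ∅ (empty_subset _)
  simp [m, altWeight, orbitUnion, hempty] at h
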